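/- Let u = (u_1 ≥ … ≥ u_p) and b = (b_1 ≥ … ≥ b_y) be decreasing sequences of integers, and let g = u ∪ b be the decreasingly ordered union (as a multiset) of the p + y integers. Then g is generalized-majorized by (u, b), i.e., g ≺' (u, b). -/

import Mathlib

/-! For a threshold `t`, count the terms `≥ t` of each sequence. The counts of the sorted union
are the sums of the counts of `u` and `b`, and for a decreasing sequence the count over a prefix
of length `k` is `min k` of the total count. Since a prefix sum is recovered from its counts by
summing over all thresholds (layer-cake), condition (2) reduces to a pointwise inequality between
counts: for `t ≤ g_{h_j}` the prefixes `u_1, …, u_{h_j - j}` and `b_1, …, b_j` lie entirely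
above `t`, while for `t > g_{h_j}` neither prefix misses a term `≥ t` of its sequence. -/

open Finset

noncomputable section

/-- `hIdx d g m j` is `h_j = min{i : d_{i-j+1} < g_i}`, where `d` has length `m`,
with the conventions `d_i = +∞` for `i ≤ 0` and `d_i = -∞` for `i > m`. -/
def hIdx (d g : ℕ → ℤ) (m j : ℕ) : ℕ :=
  sInf {i : ℕ | j ≤ i ∧ (m + j ≤ i ∨ d (i - j + 1) < g i)}

/-- Generalized majorization `g ≺' (d, a)`, where `g` has length `m + s`,
`d` has length `m` and `a` has length `s` (all sequences 1-indexed). -/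
def GenMaj (g d a : ℕ → ℤ) (m s : ℕ) : Prop :=
  (∀ i, 1 ≤ i → i ≤ m → g (i + s) ≤ d i) ∧
  (∀ j, 1 ≤ j → j ≤ s →
    ∑ i ∈ Icc 1 (hIdx d g m j), g i - ∑ i ∈ Icc 1 (hIdx d g m j - j), d i ≤
      ∑ i ∈ Icc 1 j, a i) ∧
  (∑ i ∈ Icc 1 (m + s), g i = ∑ i ∈ Icc 1 m, d i + ∑ i ∈ Icc 1 s, a i)

/-- Ordinary majorization `a ≺ b` for integer sequences of length `s`. -/
def Maj (a b : ℕ → ℤ) (s : ℕ) : Prop :=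
  (∀ k, 1 ≤ k → k ≤ s - 1 → ∑ i ∈ Icc 1 k, a i ≤ ∑ i ∈ Icc 1 k, b i) ∧
  ∑ i ∈ Icc 1 s, a i = ∑ i ∈ Icc 1 s, b i

section CountAtLeast

variable {α : Type*} [LinearOrder α]

def countAtLeast (f : ℕ → α) (k : ℕ) (t : α) : ℕ := #{i ∈ Icc 1 k | t ≤ f i}

lemma countAtLeast_le (f : ℕ → α) (k : ℕ) (t : α) : countAtLeast f k t ≤ k := by
  simpa [countAtLeast] using card_filter_le (Icc 1 k) (fun i => t ≤ f i)

lemma antitoneOn_Icc_of_succ_le {f : ℕ → α} {n : ℕ}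
    (hf : ∀ i, 1 ≤ i → i < n → f (i + 1) ≤ f i) : AntitoneOn f (Set.Icc 1 n) :=
  antitoneOn_of_add_one_le Set.ordConnected_Icc fun i _ hi hi' => hf i hi.1 hi'.2

variable {f : ℕ → α} {n : ℕ}

lemma le_countAtLeast_iff (hf : AntitoneOn f (Set.Icc 1 n)) {i : ℕ} (hi : 1 ≤ i) (hin : i ≤ n)
    {t : α} : i ≤ countAtLeast f n t ↔ t ≤ f i := by
  have hi_mem : i ∈ Set.Icc 1 n := ⟨hi, hin⟩
  constructor
  · intro hcount
    by_contra! hlt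
    have hsub : {k ∈ Icc 1 n | t ≤ f k} ⊆ Icc 1 (i - 1) := by
      intro k hk
      simp only [mem_filter, mem_Icc] at hk ⊢
      refine ⟨hk.1.1, ?_⟩
      by_contra! hik
      exact absurd ((hf hi_mem ⟨hk.1.1, hk.1.2⟩ (by omega)).trans_lt hlt) (not_lt.2 hk.2)
    have := card_le_card hsub
    rw [Nat.card_Icc] at this
    rw [countAtLeast] at hcount
    omega
  · intro ht
    have hsub : Icc 1 i ⊆ {k ∈ Icc 1 n | t ≤ f k} := by
      intro k hk
      simp only [mem_Icc] at hk
      simp only [mem_filter, mem_Icc]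
      exact ⟨⟨hk.1, hk.2.trans hin⟩, ht.trans (hf ⟨hk.1, hk.2.trans hin⟩ hi_mem hk.2)⟩
    simpa [countAtLeast] using card_le_card hsub

lemma countAtLeast_eq_min (hf : AntitoneOn f (Set.Icc 1 n)) {k : ℕ} (hk : k ≤ n) (t : α) :
    countAtLeast f k t = min k (countAtLeast f n t) := by
  have hfilter : {i ∈ Icc 1 k | t ≤ f i} = Icc 1 (min k (countAtLeast f n t)) := by
    ext i
    simp only [mem_filter, mem_Icc, le_min_iff]
    constructor
    · rintro ⟨⟨hi, hik⟩, ht⟩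
      exact ⟨hi, hik, (le_countAtLeast_iff hf hi (hik.trans hk)).2 ht⟩
    · rintro ⟨hi, hik, hN⟩
      exact ⟨⟨hi, hik⟩, (le_countAtLeast_iff hf hi (hik.trans hk)).1 hN⟩
  rw [countAtLeast, hfilter, Nat.card_Icc, Nat.add_sub_cancel]

end CountAtLeast

lemma sum_Icc_eq_mul_add_sum_countAtLeast {f : ℕ → ℤ} {k : ℕ} {M T : ℤ}
    (hf : ∀ i ∈ Icc 1 k, M ≤ f i ∧ f i ≤ T) :
    ∑ i ∈ Icc 1 k, f i = k * M + ∑ t ∈ Ioc M T, (countAtLeast f k t : ℤ) := by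
  have hlayer : ∀ i ∈ Icc 1 k,
      ∑ t ∈ Ioc M T, (if t ≤ f i then (1 : ℤ) else 0) = f i - M := by
    intro i hi
    obtain ⟨hM, hT⟩ := hf i hi
    have hfilter : {t ∈ Ioc M T | t ≤ f i} = Ioc M (f i) := by
      ext t
      simp only [mem_filter, mem_Ioc]
      exact ⟨fun h => ⟨h.1.1, h.2⟩, fun h => ⟨⟨h.1, h.2.trans hT⟩, h.2⟩⟩
    rw [sum_boole, hfilter, Int.card_Ioc_of_le _ _ hM]
  calc ∑ i ∈ Icc 1 k, f i
      = ∑ i ∈ Icc 1 k, (M + ∑ t ∈ Ioc M T, if t ≤ f i then (1 : ℤ) else 0) :=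
        sum_congr rfl fun i hi => by rw [hlayer i hi]; ring
    _ = k * M + ∑ t ∈ Ioc M T, (countAtLeast f k t : ℤ) := by
        rw [sum_add_distrib, sum_const, Nat.card_Icc, sum_comm]
        simp [countAtLeast, sum_boole]

lemma sum_Icc_le_add_of_countAtLeast_le {f f₁ f₂ : ℕ → ℤ} {k k₁ k₂ : ℕ}
    (hk : k₁ + k₂ = k)
    (hcount : ∀ t, countAtLeast f k t ≤ countAtLeast f₁ k₁ t + countAtLeast f₂ k₂ t) :
    ∑ i ∈ Icc 1 k, f i ≤ ∑ i ∈ Icc 1 k₁, f₁ i + ∑ i ∈ Icc 1 k₂, f₂ i := by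
  set S := (Icc 1 k).image f ∪ (Icc 1 k₁).image f₁ ∪ (Icc 1 k₂).image f₂
  obtain ⟨M, hM⟩ := S.bddBelow
  obtain ⟨T, hT⟩ := S.bddAbove
  have bounds : ∀ (φ : ℕ → ℤ) (l : ℕ), (Icc 1 l).image φ ⊆ S →
      ∀ i ∈ Icc 1 l, M ≤ φ i ∧ φ i ≤ T := fun φ l hS i hi =>
    have hmem : φ i ∈ (S : Set ℤ) := hS (mem_image_of_mem φ hi)
    ⟨hM hmem, hT hmem⟩
  rw [sum_Icc_eq_mul_add_sum_countAtLeast (bounds f k (subset_union_left.trans subset_union_left)),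
    sum_Icc_eq_mul_add_sum_countAtLeast
      (bounds f₁ k₁ (subset_union_right.trans subset_union_left)),
    sum_Icc_eq_mul_add_sum_countAtLeast (bounds f₂ k₂ subset_union_right), ← hk]
  have hsum : ∑ t ∈ Ioc M T, (countAtLeast f (k₁ + k₂) t : ℤ) ≤
      ∑ t ∈ Ioc M T, ((countAtLeast f₁ k₁ t : ℤ) + countAtLeast f₂ k₂ t) :=
    sum_le_sum fun t _ => by exact_mod_cast hk ▸ hcount t
  rw [sum_add_distrib] at hsum
  push_cast
  linarith

section hIdx

variable (d g : ℕ → ℤ) (m j : ℕ)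

lemma hIdx_mem : j ≤ hIdx d g m j ∧
    (m + j ≤ hIdx d g m j ∨ d (hIdx d g m j - j + 1) < g (hIdx d g m j)) :=
  Nat.sInf_mem (s := {i | j ≤ i ∧ (m + j ≤ i ∨ d (i - j + 1) < g i)})
    ⟨m + j, by omega, Or.inl le_rfl⟩

lemma hIdx_le_add : hIdx d g m j ≤ m + j :=
  Nat.sInf_le ⟨by omega, Or.inl le_rfl⟩

variable {d g m j}

lemma le_of_lt_hIdx {i : ℕ} (hji : j ≤ i) (hi : i < hIdx d g m j) : g i ≤ d (i - j + 1) := by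
  by_contra! hlt
  exact absurd (Nat.sInf_le ⟨hji, Or.inr hlt⟩ : hIdx d g m j ≤ i) (not_le.2 hi)

end hIdx

section hIdxCount

variable {p y j : ℕ} {u g : ℕ → ℤ}

lemma hIdx_sub_le_countAtLeast (hu : AntitoneOn u (Set.Icc 1 p))
    (hg : AntitoneOn g (Set.Icc 1 (p + y))) (hj : 1 ≤ j) (hjy : j ≤ y) {t : ℤ}
    (ht : t ≤ g (hIdx u g p j)) : hIdx u g p j - j ≤ countAtLeast u p t := by
  set h := hIdx u g p j
  have hjh : j ≤ h := (hIdx_mem u g p j).1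
  have hhp : h ≤ p + j := hIdx_le_add u g p j
  rcases hjh.eq_or_lt with heq | hlt
  · simp [← heq]
  rw [le_countAtLeast_iff hu (by omega) (by omega)]
  calc t ≤ g h := ht
    _ ≤ g (h - 1) := hg ⟨by omega, by omega⟩ ⟨by omega, by omega⟩ (by omega)
    _ ≤ u (h - j) := by
      simpa [show h - 1 - j + 1 = h - j by omega] using
        le_of_lt_hIdx (m := p) (by omega : j ≤ h - 1) (by omega)

lemma countAtLeast_le_hIdx_sub (hu : AntitoneOn u (Set.Icc 1 p)) {t : ℤ}
    (ht : g (hIdx u g p j) ≤ t) : countAtLeast u p t ≤ hIdx u g p j - j := by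
  set h := hIdx u g p j
  rcases (hIdx_mem u g p j).2 with hh | hlt
  · have := countAtLeast_le u p t
    omega
  by_contra! hgt
  have hle := countAtLeast_le u p t
  have hu_ge : t ≤ u (h - j + 1) := (le_countAtLeast_iff hu (by omega) (by omega)).1 hgt
  exact absurd (hu_ge.trans_lt hlt) (not_lt.2 ht)

end hIdxCount

structure IsSortedUnion (p y : ℕ) (u b g : ℕ → ℤ) : Prop where
  antitoneOn_left : AntitoneOn u (Set.Icc 1 p)
  antitoneOn_right : AntitoneOn b (Set.Icc 1 y)
  antitoneOn_union : AntitoneOn g (Set.Icc 1 (p + y))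
  map_eq : Multiset.map g (Icc 1 (p + y)).val =
    Multiset.map u (Icc 1 p).val + Multiset.map b (Icc 1 y).val

namespace IsSortedUnion

variable {p y j : ℕ} {u b g : ℕ → ℤ}

lemma countAtLeast_eq (H : IsSortedUnion p y u b g) (t : ℤ) :
    countAtLeast g (p + y) t = countAtLeast u p t + countAtLeast b y t := by
  have := congrArg (Multiset.countP (t ≤ ·)) H.map_eq
  rwa [Multiset.countP_add, Multiset.countP_map, Multiset.countP_map, Multiset.countP_map] at this

lemma sum_eq (H : IsSortedUnion p y u b g) :
    ∑ i ∈ Icc 1 (p + y), g i = ∑ i ∈ Icc 1 p, u i + ∑ i ∈ Icc 1 y, b i := by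
  simpa only [sum_eq_multiset_sum, Multiset.sum_add] using congrArg Multiset.sum H.map_eq

lemma apply_add_le_left (H : IsSortedUnion p y u b g) {i : ℕ} (hi : 1 ≤ i) (hip : i ≤ p) :
    g (i + y) ≤ u i := by
  rw [← le_countAtLeast_iff H.antitoneOn_left hi hip]
  have hg : i + y ≤ countAtLeast g (p + y) (g (i + y)) :=
    (le_countAtLeast_iff H.antitoneOn_union (by omega) (by omega)).2 le_rfl
  have := countAtLeast_le b y (g (i + y))
  have := H.countAtLeast_eq (g (i + y))
  omega

lemma le_countAtLeast_right (H : IsSortedUnion p y u b g) (hj : 1 ≤ j) (hjy : j ≤ y)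
    {t : ℤ} (ht : t ≤ g (hIdx u g p j)) : j ≤ countAtLeast b y t := by
  set h := hIdx u g p j
  have hjh : j ≤ h := (hIdx_mem u g p j).1
  have hhp : h ≤ p + j := hIdx_le_add u g p j
  have hg : h ≤ countAtLeast g (p + y) (g h) :=
    (le_countAtLeast_iff H.antitoneOn_union (by omega) (by omega)).2 le_rfl
  have hu : countAtLeast u p (g h) ≤ h - j := countAtLeast_le_hIdx_sub H.antitoneOn_left le_rfl
  have hb : j ≤ countAtLeast b y (g h) := by
    have := H.countAtLeast_eq (g h)
    omega
  rw [le_countAtLeast_iff H.antitoneOn_right hj hjy] at hb ⊢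
  exact ht.trans hb

lemma countAtLeast_right_le (H : IsSortedUnion p y u b g) (hj : 1 ≤ j) (hjy : j ≤ y)
    {t : ℤ} (ht : g (hIdx u g p j) < t) : countAtLeast b y t ≤ j := by
  set h := hIdx u g p j
  set c := countAtLeast g (p + y) t
  have hjh : j ≤ h := (hIdx_mem u g p j).1
  have hhp : h ≤ p + j := hIdx_le_add u g p j
  have hch : c < h := by
    by_contra! hhc
    exact absurd ((le_countAtLeast_iff H.antitoneOn_union (by omega) (by omega)).1 hhc)
      (not_le.2 ht)
  have hsplit := H.countAtLeast_eq t
  rcases lt_or_ge c j with hcj | hcj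
  · omega
  have hgc : t ≤ g c := (le_countAtLeast_iff H.antitoneOn_union (by omega) (by omega)).1 le_rfl
  have hu : c - j + 1 ≤ countAtLeast u p t :=
    (le_countAtLeast_iff H.antitoneOn_left (by omega) (by omega)).2
      (hgc.trans (le_of_lt_hIdx hcj hch))
  omega

lemma countAtLeast_hIdx_le (H : IsSortedUnion p y u b g) (hj : 1 ≤ j) (hjy : j ≤ y)
    (t : ℤ) : countAtLeast g (hIdx u g p j) t ≤
      countAtLeast u (hIdx u g p j - j) t + countAtLeast b j t := by
  have hhp := hIdx_le_add u g p j
  rw [countAtLeast_eq_min H.antitoneOn_union (by omega), countAtLeast_eq_min H.antitoneOn_left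
    (by omega), countAtLeast_eq_min H.antitoneOn_right hjy, H.countAtLeast_eq t]
  rcases le_or_gt t (g (hIdx u g p j)) with ht | ht
  · have := hIdx_sub_le_countAtLeast H.antitoneOn_left H.antitoneOn_union hj hjy ht
    have := H.le_countAtLeast_right hj hjy ht
    omega
  · have := countAtLeast_le_hIdx_sub H.antitoneOn_left ht.le
    have := H.countAtLeast_right_le hj hjy ht
    omega

end IsSortedUnion

/-- Lemma (union): if g is the decreasing rearrangement of the multiset union of the
decreasing sequences u (length p) and b (length y), then g ≺' (u, b). -/
theorem stmt2 (p y : ℕ) (u b g : ℕ → ℤ)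
    (hudec : ∀ i, 1 ≤ i → i < p → u (i + 1) ≤ u i)
    (hbdec : ∀ i, 1 ≤ i → i < y → b (i + 1) ≤ b i)
    (hgdec : ∀ i, 1 ≤ i → i < p + y → g (i + 1) ≤ g i)
    (hunion :
      Multiset.map g (Icc 1 (p + y)).val =
        Multiset.map u (Icc 1 p).val + Multiset.map b (Icc 1 y).val) :
    GenMaj g u b p y := by
  have H : IsSortedUnion p y u b g := ⟨antitoneOn_Icc_of_succ_le hudec,
    antitoneOn_Icc_of_succ_le hbdec, antitoneOn_Icc_of_succ_le hgdec, hunion⟩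
  refine ⟨fun i hi hip => H.apply_add_le_left hi hip, fun j hj hjy => ?_, H.sum_eq⟩
  have := sum_Icc_le_add_of_countAtLeast_le (Nat.sub_add_cancel (hIdx_mem u g p j).1)
    (H.countAtLeast_hIdx_le hj hjy)
  linarith
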